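/- (Quantitative monotonicity) If M β-reduces to N in m steps, then M* β-reduces to N* in at most 2^(|M|^(2^m)) steps. -/

import Mathlib

inductive Lam : Type
  | var : ℕ → Lam
  | lam : Lam → Lam
  | app : Lam → Lam → Lam
  deriving DecidableEq

namespace Lam

/-- term size -/
def size : Lam → ℕ
  | var _ => 1
  | lam M => 1 + M.size
  | app M N => 1 + M.size + N.size

/-- lift (shift) free variables ≥ d by 1 -/
def lift (d : ℕ) : Lam → Lam
  | var n => if n < d then var n else var (n+1)
  | lam M => lam (M.lift (d+1))
  | app M N => app (M.lift d) (N.lift d)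

/-- capture-avoiding substitution of N for the free variable x (de Bruijn) -/
def subst : Lam → ℕ → Lam → Lam
  | var n, x, N => if n = x then N else if x < n then var (n-1) else var n
  | lam M, x, N => lam (M.subst (x+1) (N.lift 0))
  | app M P, x, N => app (M.subst x N) (P.subst x N)

/-- number of free occurrences of the variable x -/
def count : Lam → ℕ → ℕ
  | var n, x => if n = x then 1 else 0
  | lam M, x => M.count (x+1)
  | app M N, x => M.count x + N.count x

/-- one-step β-reduction -/
inductive Step : Lam → Lam → Prop
  | beta (M N : Lam) : Step (app (lam M) N) (M.subst 0 N)
  | appL {M M' : Lam} (N : Lam) : Step M M' → Step (app M N) (app M' N)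
  | appR (M : Lam) {N N' : Lam} : Step N N' → Step (app M N) (app M N')
  | abs {M M' : Lam} : Step M M' → Step (lam M) (lam M')

/-- many-step β-reduction (reflexive-transitive closure) -/
def Red : Lam → Lam → Prop := Relation.ReflTransGen Step

/-- n-step β-reduction -/
def Steps : ℕ → Lam → Lam → Prop
  | 0, M, N => M = N
  | n+1, M, N => ∃ P, Step M P ∧ Steps n P N

/-- Takahashi translation (Gross-Knuth complete development) -/
def star : Lam → Lam
  | var n => var n
  | lam M => lam (star M)
  | app (lam M) N => (star M).subst 0 (star N)
  | app (var n) N => app (var n) (star N)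
  | app (app M₁ M₂) N => app (star (app M₁ M₂)) (star N)

/-- iterated Takahashi translation M^(n*) -/
def iterStar (n : ℕ) (M : Lam) : Lam := star^[n] M

end Lam

/-!
A β-step `M → N` is simulated by `M* ↠ N*` in fewer than `|M*|` steps (`ShortRed`). For a
contracted redex this is the substitution lemma `P*[x := Q*] ↠ (P[x := Q])*`, again in fewer
than `|P*[x := Q*]|` steps: substitution may create redexes that the translation of `P` did not
contract, each costing one step. By induction on `m`, the first step of `M ↠^m N` then costs
less than `|M*| ≤ 2^(|M|-1)`, and the remaining ones, starting from a term of size below `|M|²`,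
less than `2^((|M|²-1)^(2^(m-1)))`; both are at most half of `2^(|M|^(2^m))`.
-/

namespace Lam

theorem size_pos (M : Lam) : 0 < M.size := by
  cases M <;> simp only [size] <;> omega

theorem size_lift (d : ℕ) (M : Lam) : (M.lift d).size = M.size := by
  induction M generalizing d with
  | var n => unfold lift; split <;> rfl
  | lam M ih => simp only [lift, size, ih]
  | app M N ihM ihN => simp only [lift, size, ihM, ihN]

theorem count_le_size (M : Lam) (x : ℕ) : M.count x ≤ M.size := by
  induction M generalizing x with
  | var n => unfold count; split <;> simp only [size] <;> omega
  | lam M ih => simp only [count, size]; grind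
  | app M N ihM ihN => simp only [count, size]; grind

theorem size_subst (M : Lam) (x : ℕ) (N : Lam) :
    (M.subst x N).size = M.size + M.count x * (N.size - 1) := by
  induction M generalizing x N with
  | var n =>
    have := size_pos N
    unfold subst count
    split_ifs <;> simp only [size] <;> omega
  | lam M ih => simp only [subst, count, size, ih, size_lift]; omega
  | app M P ihM ihP => simp only [subst, count, size, ihM, ihP]; ring

theorem size_le_size_subst (M : Lam) (x : ℕ) (N : Lam) : M.size ≤ (M.subst x N).size := by
  rw [size_subst]; omega

theorem size_subst_le_mul (M : Lam) (x : ℕ) (N : Lam) :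
    (M.subst x N).size ≤ M.size * N.size := by
  have hcount := Nat.mul_le_mul_right (N.size - 1) (count_le_size M x)
  have := size_pos N
  calc (M.subst x N).size ≤ M.size + M.size * (N.size - 1) := by rw [size_subst]; omega
    _ = M.size * N.size := by
      rw [add_comm, ← Nat.mul_add_one, Nat.sub_add_cancel this]

theorem lift_lift_of_le (M : Lam) {e d : ℕ} (h : e ≤ d) :
    (M.lift e).lift (d + 1) = (M.lift d).lift e := by
  induction M generalizing e d with
  | var n => simp only [lift]; split_ifs <;> simp only [lift] <;> split_ifs <;> grind
  | lam M ih => simp only [lift, ih (Nat.succ_le_succ h)]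
  | app M N ihM ihN => simp only [lift, ihM h, ihN h]

theorem lift_subst_of_le (M : Lam) {x d : ℕ} (V : Lam) (h : x ≤ d) :
    (M.subst x V).lift d = (M.lift (d + 1)).subst x (V.lift d) := by
  induction M generalizing x d V with
  | var n => simp only [lift, subst]; split_ifs <;> simp only [lift, subst] <;> grind
  | lam M ih =>
    simp only [subst, lift, ih _ (Nat.succ_le_succ h), lift_lift_of_le V (Nat.zero_le d)]
  | app M P ihM ihP => simp only [subst, lift, ihM V h, ihP V h]

theorem lift_subst_of_ge (M : Lam) {x d : ℕ} (V : Lam) (h : d ≤ x) :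
    (M.subst x V).lift d = (M.lift d).subst (x + 1) (V.lift d) := by
  induction M generalizing x d V with
  | var n => simp only [lift, subst]; split_ifs <;> simp only [lift, subst] <;> grind
  | lam M ih =>
    simp only [subst, lift, ih _ (Nat.succ_le_succ h), lift_lift_of_le V (Nat.zero_le d)]
  | app M P ihM ihP => simp only [subst, lift, ihM V h, ihP V h]

theorem subst_lift_self (M : Lam) (d : ℕ) (Z : Lam) : (M.lift d).subst d Z = M := by
  induction M generalizing d Z with
  | var n => simp only [lift]; split_ifs <;> simp only [subst] <;> grind
  | lam M ih => simp only [lift, subst, ih]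
  | app M P ihM ihP => simp only [lift, subst, ihM, ihP]

theorem subst_subst_of_le (M : Lam) {y x : ℕ} (V W : Lam) (h : y ≤ x) :
    (M.subst y V).subst x W = (M.subst (x + 1) (W.lift y)).subst y (V.subst x W) := by
  induction M generalizing y x V W with
  | var n =>
    simp only [subst]
    split_ifs <;> simp only [subst, subst_lift_self] <;> grind
  | lam M ih =>
    simp only [subst, ih _ _ (Nat.succ_le_succ h), lift_lift_of_le W (Nat.zero_le y),
      lift_subst_of_ge V W (Nat.zero_le x)]
  | app M P ihM ihP => simp only [subst, ihM V W h, ihP V W h]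

theorem Step.lift {M N : Lam} (h : Step M N) (d : ℕ) : Step (M.lift d) (N.lift d) := by
  induction h generalizing d with
  | beta P Q => rw [lift_subst_of_le P Q (Nat.zero_le d)]; exact .beta _ _
  | appL _ _ ih => exact .appL _ (ih d)
  | appR _ _ ih => exact .appR _ (ih d)
  | abs _ ih => exact .abs (ih (d + 1))

theorem Step.subst {M N : Lam} (h : Step M N) (x : ℕ) (P : Lam) :
    Step (M.subst x P) (N.subst x P) := by
  induction h generalizing x P with
  | beta A B => rw [subst_subst_of_le A B P (Nat.zero_le x)]; exact .beta _ _
  | appL _ _ ih => exact .appL _ (ih x P)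
  | appR _ _ ih => exact .appR _ (ih x P)
  | abs _ ih => exact .abs (ih (x + 1) (P.lift 0))

namespace Steps

theorem single {M N : Lam} (h : Step M N) : Steps 1 M N := ⟨N, h, rfl⟩

theorem trans {a b : ℕ} {M P N : Lam} (h₁ : Steps a M P) (h₂ : Steps b P N) :
    Steps (a + b) M N := by
  induction a generalizing M with
  | zero => obtain rfl : M = P := h₁; simpa using h₂
  | succ a ih =>
    obtain ⟨R, hMR, hRP⟩ := h₁
    rw [Nat.succ_add]
    exact ⟨R, hMR, ih hRP⟩

theorem map_mul (f : Lam → Lam) {c : ℕ} (hf : ∀ {A B : Lam}, Step A B → Steps c (f A) (f B))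
    {l : ℕ} {M N : Lam} (h : Steps l M N) : Steps (c * l) (f M) (f N) := by
  induction l generalizing M with
  | zero => obtain rfl : M = N := h; rfl
  | succ l ih =>
    obtain ⟨R, hMR, hRN⟩ := h
    rw [Nat.mul_succ, Nat.add_comm]
    exact (hf hMR).trans (ih hRN)

theorem map (f : Lam → Lam) (hf : ∀ {A B : Lam}, Step A B → Step (f A) (f B))
    {l : ℕ} {M N : Lam} (h : Steps l M N) : Steps l (f M) (f N) := by
  simpa using map_mul f (fun h => single (hf h)) h

theorem lam {l : ℕ} {M N : Lam} (h : Steps l M N) : Steps l (lam M) (lam N) :=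
  map Lam.lam .abs h

theorem app {a b : ℕ} {M M' N N' : Lam} (hM : Steps a M M') (hN : Steps b N N') :
    Steps (a + b) (app M N) (app M' N') :=
  (map (Lam.app · N) (.appL N) hM).trans (map (Lam.app M') (.appR M') hN)

theorem subst_left {l : ℕ} {U U' : Lam} (h : Steps l U U') (y : ℕ) (V : Lam) :
    Steps l (U.subst y V) (U'.subst y V) :=
  map (·.subst y V) (·.subst y V) h

end Steps

theorem Step.subst_right (U : Lam) (y : ℕ) {V V' : Lam} (h : Step V V') :
    Steps (U.count y) (U.subst y V) (U.subst y V') := by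
  induction U generalizing y V V' with
  | var n =>
    unfold Lam.subst count
    split_ifs
    · exact .single h
    all_goals rfl
  | lam M ih => exact (ih (y + 1) (h.lift 0)).lam
  | app M P ihM ihP => exact (ihM y h).app (ihP y h)

theorem Steps.subst_right (U : Lam) (y : ℕ) {l : ℕ} {V V' : Lam} (h : Steps l V V') :
    Steps (U.count y * l) (U.subst y V) (U.subst y V') :=
  map_mul (U.subst y) (Step.subst_right U y) h

theorem star_app_of_ne_lam {A : Lam} (hA : ∀ R, A ≠ lam R) (B : Lam) :
    (app A B).star = app A.star B.star := by
  cases A with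
  | lam R => exact absurd rfl (hA R)
  | _ => rfl

theorem star_lift : ∀ (M : Lam) (d : ℕ), (M.lift d).star = M.star.lift d
  | var n, d => by simp only [lift, star]; split <;> rfl
  | lam M, d => congrArg lam (star_lift M (d + 1))
  | app (lam P) B, d => by
    simp only [lift, star, star_lift P (d + 1), star_lift B d,
      lift_subst_of_le P.star B.star (Nat.zero_le d)]
  | app (var n) B, d => by
    rw [lift, star_app_of_ne_lam (by simp only [lift]; split <;> simp), star_lift (var n) d,
      star_lift B d]
    rfl
  | app (app A₁ A₂) B, d => by
    rw [lift, star_app_of_ne_lam (by simp [lift]), star_lift (app A₁ A₂) d, star_lift B d]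
    rfl

theorem two_mul_size_star_app_le {A : Lam} (hA : ∀ R, A ≠ lam R) {B : Lam}
    (hA' : 2 * A.star.size ≤ 2 ^ A.size) (hB : 2 * B.star.size ≤ 2 ^ B.size) :
    2 * (app A B).star.size ≤ 2 ^ (app A B).size := by
  have := Nat.one_lt_two_pow (size_pos A).ne'
  have := Nat.one_lt_two_pow (size_pos B).ne'
  rw [star_app_of_ne_lam hA]
  simp only [size, pow_add]
  nlinarith

theorem two_mul_size_star_le : ∀ M : Lam, 2 * M.star.size ≤ 2 ^ M.size
  | var n => by simp [star, size]
  | lam M => by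
    have := two_mul_size_star_le M
    have := Nat.one_lt_two_pow (size_pos M).ne'
    simp only [star, size, pow_add]
    omega
  | app (lam P) B => by
    have hP := two_mul_size_star_le P
    have hB := two_mul_size_star_le B
    have := size_subst_le_mul P.star 0 B.star
    simp only [star, size, pow_add]
    nlinarith [Nat.one_le_two_pow (n := P.size)]
  | app (var n) B =>
    two_mul_size_star_app_le (by simp) (two_mul_size_star_le (var n)) (two_mul_size_star_le B)
  | app (app A₁ A₂) B =>
    two_mul_size_star_app_le (by simp) (two_mul_size_star_le (app A₁ A₂))
      (two_mul_size_star_le B)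

theorem exists_steps_app_star (A B : Lam) :
    ∃ k ≤ 1, Steps k (app A.star B.star) (app A B).star := by
  cases A with
  | lam R => exact ⟨1, le_rfl, .single (.beta R.star B.star)⟩
  | _ => exact ⟨0, zero_le_one, rfl⟩

def ShortRed (M N : Lam) : Prop := ∃ l < M.size, Steps l M N

namespace ShortRed

theorem refl (M : Lam) : ShortRed M M := ⟨0, size_pos M, rfl⟩

theorem lam {M N : Lam} (h : ShortRed M N) : ShortRed (lam M) (lam N) := by
  obtain ⟨l, hl, hs⟩ := h
  exact ⟨l, by simp only [size]; omega, hs.lam⟩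

theorem app_star {M N A B : Lam} (hM : ShortRed M A.star) (hN : ShortRed N B.star) :
    ShortRed (app M N) (app A B).star := by
  obtain ⟨a, ha, hsM⟩ := hM
  obtain ⟨b, hb, hsN⟩ := hN
  obtain ⟨k, hk, hsk⟩ := exists_steps_app_star A B
  exact ⟨a + b + k, by simp only [size]; omega, (hsM.app hsN).trans hsk⟩

end ShortRed

theorem shortRed_subst_star : ∀ (P Q : Lam) (x : ℕ),
    ShortRed (P.star.subst x Q.star) (P.subst x Q).star
  | var n, Q, x => by
    convert ShortRed.refl _ using 1
    simp only [star, subst]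
    split_ifs <;> rfl
  | lam P, Q, x => by
    have h := shortRed_subst_star P (Q.lift 0) (x + 1)
    rw [star_lift] at h
    exact h.lam
  | app (lam A) B, Q, x => by
    obtain ⟨lA, hlA, hsA⟩ := shortRed_subst_star A (Q.lift 0) (x + 1)
    obtain ⟨lB, hlB, hsB⟩ := shortRed_subst_star B Q x
    rw [star_lift] at hlA hsA
    set U := A.star.subst (x + 1) (Q.star.lift 0)
    set V := B.star.subst x Q.star
    have hU : (app (lam A) B).star.subst x Q.star = U.subst 0 V :=
      subst_subst_of_le A.star B.star Q.star (Nat.zero_le x)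
    have hlB' := Nat.mul_le_mul_left (U.count 0) (Nat.le_sub_one_of_lt hlB)
    rw [hU]
    refine ⟨U.count 0 * lB + lA, ?_, (hsB.subst_right U 0).trans (hsA.subst_left 0 _)⟩
    rw [size_subst]
    omega
  | app (var n) B, Q, x => by
    rw [star_app_of_ne_lam (by simp)]
    exact (shortRed_subst_star (var n) Q x).app_star (shortRed_subst_star B Q x)
  | app (app A₁ A₂) B, Q, x => by
    rw [star_app_of_ne_lam (by simp)]
    exact (shortRed_subst_star (app A₁ A₂) Q x).app_star (shortRed_subst_star B Q x)

theorem Step.shortRed_star : ∀ {M N : Lam}, Step M N → ShortRed M.star N.star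
  | _, _, .beta P Q => shortRed_subst_star P Q 0
  | _, _, .abs h => h.shortRed_star.lam
  | _, _, .appR A h => by
    cases A with
    | lam P =>
      obtain ⟨l, hl, hs⟩ := h.shortRed_star
      have := Nat.mul_le_mul_left (P.star.count 0) (Nat.le_sub_one_of_lt hl)
      refine ⟨P.star.count 0 * l, ?_, hs.subst_right P.star 0⟩
      rw [star, size_subst]
      have := size_pos P.star
      omega
    | _ =>
      rw [star_app_of_ne_lam (by simp)]
      exact (ShortRed.refl _).app_star h.shortRed_star
  | _, _, .appL (M := A) B h => by
    cases A with
    | lam P =>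
      cases h with
      | abs h =>
        obtain ⟨l, hl, hs⟩ := h.shortRed_star
        exact ⟨l, hl.trans_le (size_le_size_subst _ _ _), hs.subst_left 0 B.star⟩
    | _ =>
      rw [star_app_of_ne_lam (by simp)]
      exact h.shortRed_star.app_star (.refl B.star)
termination_by M => M.size
decreasing_by all_goals subst_vars; simp only [size]; omega

theorem Step.size_lt_sq {M N : Lam} (h : Step M N) : N.size < M.size ^ 2 := by
  induction h with
  | beta P Q =>
    have := size_subst_le_mul P 0 Q
    simp only [size]
    nlinarith
  | @appL A _ B _ _ => simp only [size]; nlinarith [size_pos A, size_pos B]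
  | @appR A B _ _ _ => simp only [size]; nlinarith [size_pos A, size_pos B]
  | @abs P _ _ _ => simp only [size]; nlinarith [size_pos P]

theorem Steps.exists_steps_star_lt {m : ℕ} {M N : Lam} (h : Steps m M N) :
    ∃ l, Steps l M.star N.star ∧ l < 2 ^ M.size ^ 2 ^ m := by
  induction m generalizing M with
  | zero => obtain rfl : M = N := h; exact ⟨0, rfl, Nat.two_pow_pos _⟩
  | succ m ih =>
    obtain ⟨P, hMP, hPN⟩ := h
    obtain ⟨l₀, hl₀, hs₀⟩ := hMP.shortRed_star
    obtain ⟨l, hs, hl⟩ := ih hPN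
    set K := M.size ^ 2 ^ (m + 1) with hK
    have hM : 2 * M.star.size ≤ 2 ^ K :=
      (two_mul_size_star_le M).trans
        (Nat.pow_le_pow_right two_pos (Nat.le_self_pow (by positivity) _))
    have hPK : P.size ^ 2 ^ m < K := by
      rw [hK, pow_succ', pow_mul]
      exact Nat.pow_lt_pow_left hMP.size_lt_sq (by positivity)
    have hP : 2 * 2 ^ P.size ^ 2 ^ m ≤ 2 ^ K := by
      rw [← pow_succ']
      exact Nat.pow_le_pow_right two_pos hPK
    exact ⟨l₀ + l, hs₀.trans hs, by omega⟩

end Lam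

/-- quantitative monotonicity: if M ↠^m N then M* ↠ N*
in at most 2^(|M|^(2^m)) steps -/
theorem star_mono_steps {m : ℕ} {M N : Lam} (h : Lam.Steps m M N) :
    ∃ l : ℕ, Lam.Steps l M.star N.star ∧ l ≤ 2 ^ (M.size ^ 2 ^ m) := by
  obtain ⟨l, hs, hl⟩ := h.exists_steps_star_lt
  exact ⟨l, hs, hl.le⟩
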